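/- In the smooth RCSN setting, suppose φ is bounded below on E, that x̄ is an accumulation point of (x_k), and that φ satisfies the Kurdyka–Łojasiewicz property at x̄ with ψ(t) = M t^{1−θ} for some M > 0 and θ ∈ (0, 1/2]: there exists η > 0 such that M(1−θ)(φ(x) − φ(x̄))^{−θ} · ‖∇φ(x)‖ ≥ 1 for all x with ‖x − x̄‖ ≤ η and φ(x̄) < φ(x) < φ(x̄) + η. Then (x_k) converges to x̄ at least R-linearly: there exist c > 0 and μ ∈ (0,1) such that ‖x_k − x̄‖ ≤ c μ^k for all k. -/

import Mathlib

/-!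
The Armijo rule gives sufficient decrease `σζτₖ‖dₖ‖² ≤ φ(xₖ) - φ(xₖ₊₁)`, so `φ(xₖ)` decreases
strictly to `φ(x̄)`. Near `x̄` three estimates hold: the regularized Newton equation bounds
`‖∇φ(xₖ)‖` by a multiple of `‖dₖ‖`, since the Hessian of `g` is bounded on a ball; because
`θ ≤ 1/2`, the KL inequality becomes `√(φ(xₖ) - φ(x̄)) ≤ K‖dₖ‖` once the gap is below `1`; and the
Lipschitz continuity of `∇φ` keeps the backtracking step sizes above some `t₀ > 0`. Together they
make the square root of the gap contract by the fixed factor `√(K² / (K² + σζt₀))` while each step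
has length `O(√gap)`. Starting from an index of the convergent subsequence that is close enough
to `x̄` with a small enough gap, the iterates never leave the neighbourhood, their steps decay
geometrically, and `xₖ` converges R-linearly to its cluster point `x̄`.
-/

open scoped RealInnerProductSpace NNReal
open Filter Topology Metric

theorem sqrt_le_mul_of_one_le_mul_rpow_neg {Δ a w θ : ℝ} (hΔ0 : 0 < Δ) (hΔ1 : Δ ≤ 1)
    (hθ : θ ≤ 1 / 2) (h : 1 ≤ a * Δ ^ (-θ) * w) : √Δ ≤ a * w :=
  calc √Δ = Δ ^ (1 / 2 : ℝ) := Real.sqrt_eq_rpow Δ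
    _ ≤ Δ ^ θ := Real.rpow_le_rpow_of_exponent_ge hΔ0 hΔ1 hθ
    _ ≤ Δ ^ θ * (a * Δ ^ (-θ) * w) := le_mul_of_one_le_right (by positivity) h
    _ = a * w := by rw [Real.rpow_neg hΔ0.le]; field_simp

theorem mul_le_div_mul_sqrt {a t b Δ K : ℝ} (ha : 0 < a) (hb : 0 ≤ b) (hΔ : 0 ≤ Δ)
    (hdec : a * t * b ^ 2 ≤ Δ) (hKL : √Δ ≤ K * b) : t * b ≤ K / a * √Δ := by
  rw [div_mul_eq_mul_div, le_div_iff₀ ha]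
  rcases hb.eq_or_lt with rfl | hb
  · simp only [mul_zero, zero_mul] at hKL ⊢
    rw [le_antisymm hKL (Real.sqrt_nonneg Δ), mul_zero]
  · refine le_of_mul_le_mul_right ?_ hb
    nlinarith [Real.mul_self_sqrt hΔ, Real.sqrt_nonneg Δ]

theorem sqrt_le_mul_sqrt_of_add_le {c K b Δ Δ' : ℝ} (hc : 0 < c) (hΔ' : 0 ≤ Δ')
    (hdec : Δ' + c * b ^ 2 ≤ Δ) (hKL : √Δ ≤ K * b) :
    √Δ' ≤ √(K ^ 2 / (K ^ 2 + c)) * √Δ := by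
  have hΔ'Δ : Δ' ≤ Δ := by nlinarith [sq_nonneg b]
  have hΔ : Δ ≤ K ^ 2 * b ^ 2 := by
    rw [← mul_pow, ← Real.sq_sqrt (hΔ'.trans hΔ'Δ)]
    exact pow_le_pow_left₀ (Real.sqrt_nonneg _) hKL 2
  rw [← Real.sqrt_mul (by positivity)]
  refine Real.sqrt_le_sqrt ?_
  rw [div_mul_eq_mul_div, le_div_iff₀ (by positivity)]
  nlinarith [mul_le_mul_of_nonneg_left hdec (sq_nonneg K), mul_le_mul_of_nonneg_left hΔ hc.le,
    mul_le_mul_of_nonneg_left hΔ'Δ hc.le]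

theorem sqrt_le_mul_sqrt_and_mul_le_of_descent {a t₀ K τ b Δ Δ' ε : ℝ} (ha : 0 < a)
    (ht₀ : 0 < t₀) (hb : 0 ≤ b) (hΔ : 0 ≤ Δ) (hΔ' : 0 ≤ Δ')
    (hdec : a * τ * b ^ 2 ≤ Δ - Δ') (hKL : √Δ ≤ K * b) (hτ : τ * b < ε → t₀ ≤ τ)
    (hε : K / a * √Δ < ε) :
    √Δ' ≤ √(K ^ 2 / (K ^ 2 + a * t₀)) * √Δ ∧ τ * b ≤ K / a * √Δ := by
  have hlen := mul_le_div_mul_sqrt (t := τ) ha hb hΔ (by linarith) hKL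
  have hτb : a * t₀ * b ^ 2 ≤ a * τ * b ^ 2 := by gcongr; exact hτ (hlen.trans_lt hε)
  exact ⟨sqrt_le_mul_sqrt_of_add_le (mul_pos ha ht₀) hΔ' (by linarith) hKL, hlen⟩

section Normed

variable {F : Type*} [NormedAddCommGroup F] [NormedSpace ℝ F]

theorem norm_le_mul_norm_of_add_smul_eq_neg {H : F →L[ℝ] F} {d w : F} {r A R : ℝ}
    (hH : ‖H‖ ≤ A) (hr : r ∈ Set.Icc 0 R) (h : H d + r • d = -w) :
    ‖w‖ ≤ (A + R) * ‖d‖ := by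
  rw [← norm_neg w, ← h, add_mul]
  refine (norm_add_le _ _).trans (add_le_add (H.le_of_opNorm_le hH d) ?_)
  rw [norm_smul, Real.norm_of_nonneg hr.1]
  exact mul_le_mul_of_nonneg_right hr.2 (norm_nonneg d)

theorem add_div_smul_mem_closedBall {x xb d : F} {τ β r : ℝ} (hβ : β ∈ Set.Ioc 0 1)
    (hx : dist x xb < β * r / 2) (hd : τ * ‖d‖ < β * r / 2) (hτ : 0 ≤ τ) :
    x + (τ / β) • d ∈ closedBall xb r := by
  have hr : 0 ≤ r := by nlinarith [dist_nonneg (x := x) (y := xb), hβ.1]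
  have htrial : ‖(τ / β) • d‖ < r / 2 := by
    rw [norm_smul, Real.norm_of_nonneg (div_nonneg hτ hβ.1.le), div_mul_eq_mul_div,
      div_lt_iff₀ hβ.1]
    linarith
  rw [mem_closedBall]
  linarith [dist_triangle (x + (τ / β) • d) x xb, dist_self_add_left ((τ / β) • d) x,
    mul_le_of_le_one_left hr hβ.2]

end Normed

section Gradient

variable {E : Type*} [NormedAddCommGroup E] [InnerProductSpace ℝ E] [CompleteSpace E]

theorem gradient_sub_apply {f g : E → ℝ} {x : E} (hf : DifferentiableAt ℝ f x)
    (hg : DifferentiableAt ℝ g x) :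
    gradient (fun y => f y - g y) x = gradient f x - gradient g x := by
  rw [gradient, gradient, gradient, fderiv_fun_sub hf hg, map_sub]

theorem ContDiff.gradient {f : E → ℝ} {n : WithTop ℕ∞} (hf : ContDiff ℝ (n + 1) f) :
    ContDiff ℝ n (gradient f) :=
  (InnerProductSpace.toDual ℝ E).symm.contDiff.comp (hf.fderiv_right le_rfl)

theorem locallyLipschitz_gradient_of_eq_sub {g h φ : E → ℝ} (hg : ContDiff ℝ 2 g)
    (hh : Differentiable ℝ h) (hhl : LocallyLipschitz (gradient h))
    (hφ : ∀ y, φ y = g y - h y) : LocallyLipschitz (gradient φ) := by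
  have hgrad : gradient φ = fun z => gradient g z - gradient h z :=
    funext fun z => funext hφ ▸ gradient_sub_apply ((hg.differentiable two_ne_zero) z) (hh z)
  exact hgrad ▸ (hg.gradient (n := 1)).locallyLipschitz.sub hhl

open InnerProductSpace in
theorem sub_sub_inner_gradient_le {f : E → ℝ} {s : Set E} {L : ℝ≥0} {x y : E}
    (hs : Convex ℝ s) (hf : ∀ z ∈ s, DifferentiableAt ℝ f z)
    (hL : LipschitzOnWith L (gradient f) s) (hx : x ∈ s) (hy : y ∈ s) :
    f y - f x - ⟪gradient f x, y - x⟫ ≤ L * ‖y - x‖ ^ 2 := by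
  set w := gradient f x
  set S := s ∩ closedBall x ‖y - x‖
  have hderiv : ∀ z ∈ S, HasFDerivWithinAt (fun z => f z - ⟪w, z⟫)
      (fderiv ℝ f z - toDual ℝ E w) S z := fun z hz =>
    ((hf z hz.1).hasFDerivAt.sub (toDual ℝ E w).hasFDerivAt).hasFDerivWithinAt
  have hbound : ∀ z ∈ S, ‖fderiv ℝ f z - toDual ℝ E w‖ ≤ L * ‖y - x‖ := by
    intro z hz
    rw [← toDual_gradient, ← map_sub, LinearIsometryEquiv.norm_map]
    calc ‖gradient f z - w‖ ≤ L * ‖z - x‖ := hL.norm_sub_le hz.1 hx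
      _ ≤ L * ‖y - x‖ := by gcongr; exact mem_closedBall_iff_norm.1 hz.2
  have hmv := (hs.inter (convex_closedBall x _)).norm_image_sub_le_of_norm_hasFDerivWithin_le
    hderiv hbound ⟨hx, mem_closedBall_self (norm_nonneg _)⟩
    ⟨hy, mem_closedBall_iff_norm.2 le_rfl⟩
  calc f y - f x - ⟪w, y - x⟫ = (f y - ⟪w, y⟫) - (f x - ⟪w, x⟫) := by
        rw [inner_sub_right]; ring
    _ ≤ ‖(f y - ⟪w, y⟫) - (f x - ⟪w, x⟫)‖ := Real.le_norm_self _
    _ ≤ L * ‖y - x‖ * ‖y - x‖ := hmv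
    _ = L * ‖y - x‖ ^ 2 := by ring

theorem lt_mul_of_armijo_fails {f : E → ℝ} {s : Set E} {L : ℝ≥0} {x d : E} {t σ ζ : ℝ}
    (hs : Convex ℝ s) (hf : ∀ z ∈ s, DifferentiableAt ℝ f z)
    (hL : LipschitzOnWith L (gradient f) s) (hx : x ∈ s) (hxd : x + t • d ∈ s)
    (ht : 0 < t) (hσ : σ < 1) (hd : d ≠ 0) (hdesc : ⟪gradient f x, d⟫ ≤ -ζ * ‖d‖ ^ 2)
    (hfail : f x + σ * t * ⟪gradient f x, d⟫ < f (x + t • d)) :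
    (1 - σ) * ζ < L * t := by
  have hdescent := sub_sub_inner_gradient_le hs hf hL hx hxd
  simp only [add_sub_cancel_left, inner_smul_right, norm_smul, Real.norm_of_nonneg ht.le]
    at hdescent
  have hd2 : 0 < t * ‖d‖ ^ 2 := by positivity
  have : (1 - σ) * ζ * (t * ‖d‖ ^ 2) < L * t * (t * ‖d‖ ^ 2) := by
    nlinarith [mul_le_mul_of_nonneg_left hdesc (mul_nonneg (sub_nonneg.2 hσ.le) ht.le)]
  exact lt_of_mul_lt_mul_right this hd2.le

theorem min_le_of_backtracking {f : E → ℝ} {s : Set E} {L : ℝ≥0} {x d : E}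
    {τ β σ ζ tmin : ℝ} (hs : Convex ℝ s) (hf : ∀ z ∈ s, DifferentiableAt ℝ f z)
    (hL : LipschitzOnWith L (gradient f) s) (hx : x ∈ s) (hxd : x + (τ / β) • d ∈ s)
    (hτ : 0 < τ) (hβ : 0 < β) (hσ : σ < 1) (hd : d ≠ 0)
    (hdesc : ⟪gradient f x, d⟫ ≤ -ζ * ‖d‖ ^ 2)
    (hbt : tmin ≤ τ ∨ f x + σ * (τ / β) * ⟪gradient f x, d⟫ < f (x + (τ / β) • d)) :
    min tmin (β * (1 - σ) * ζ / (L + 1)) ≤ τ := by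
  rcases hbt with hτmin | hfail
  · exact (min_le_left _ _).trans hτmin
  have hLτ := lt_mul_of_armijo_fails hs hf hL hx hxd (div_pos hτ hβ) hσ hd hdesc hfail
  refine (min_le_right _ _).trans ?_
  rw [div_le_iff₀ (by positivity)]
  have : (L : ℝ) * (τ / β) * β = L * τ := by field_simp
  nlinarith [mul_lt_mul_of_pos_right hLτ hβ, L.coe_nonneg]

end Gradient

theorem StrictAnti.lt_of_tendsto_comp {α : Type*} [TopologicalSpace α] [Preorder α]
    [ClosedIicTopology α] {u : ℕ → α} {s : ℕ → ℕ} {a : α} (hu : StrictAnti u)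
    (hs : Tendsto s atTop atTop) (h : Tendsto (u ∘ s) atTop (𝓝 a)) (k : ℕ) : a < u k :=
  (le_of_tendsto h ((hs.eventually_ge_atTop (k + 1)).mono fun _ hj => hu.antitone hj)).trans_lt
    (hu k.lt_succ_self)

theorem exists_pos_le_mul_pow_of_le_mul_pow {u : ℕ → ℝ} {C ν : ℝ} {N : ℕ} (hν : 0 < ν)
    (h : ∀ k, N ≤ k → u k ≤ C * ν ^ k) : ∃ c > 0, ∀ k, u k ≤ c * ν ^ k := by
  set S := ∑ i ∈ Finset.range N, |u i| / ν ^ i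
  have hS : 0 ≤ S := by positivity
  refine ⟨S + |C| + 1, by positivity, fun k => ?_⟩
  rcases lt_or_ge k N with hk | hk
  · have hkS : |u k| / ν ^ k ≤ S :=
      Finset.single_le_sum (f := fun i => |u i| / ν ^ i) (fun i _ => by positivity)
        (Finset.mem_range.2 hk)
    calc u k ≤ |u k| / ν ^ k * ν ^ k := by
          rw [div_mul_cancel₀ _ (by positivity)]; exact le_abs_self _
      _ ≤ (S + |C| + 1) * ν ^ k := by gcongr; linarith [abs_nonneg C]
  · calc u k ≤ C * ν ^ k := h k hk
      _ ≤ (S + |C| + 1) * ν ^ k := by gcongr; linarith [le_abs_self C]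

section Metric

variable {α : Type*} [PseudoMetricSpace α]

theorem exists_dist_le_mul_pow_of_dist_succ_le {x : ℕ → α} {xb : α} {s : ℕ → ℕ}
    {C ν : ℝ} {N : ℕ} (hν0 : 0 < ν) (hν1 : ν < 1)
    (hstep : ∀ n, dist (x (N + n)) (x (N + n + 1)) ≤ C * ν ^ n)
    (hs : Tendsto s atTop atTop) (hxs : Tendsto (x ∘ s) atTop (𝓝 xb)) :
    ∃ c > 0, ∀ k, dist (x k) xb ≤ c * ν ^ k := by
  have hstep' : ∀ n, dist (x (n + N)) (x (n + 1 + N)) ≤ C * ν ^ n := fun n => by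
    rw [add_right_comm, add_comm n N]; exact hstep n
  have hx : Tendsto x atTop (𝓝 xb) := tendsto_nhds_of_cauchySeq_of_subseq
    ((cauchySeq_shift N).1 (cauchySeq_of_le_geometric ν C hν1 hstep')) hs hxs
  refine exists_pos_le_mul_pow_of_le_mul_pow (C := C / (1 - ν) / ν ^ N) (N := N) hν0
    fun k hk => ?_
  obtain ⟨n, rfl⟩ := Nat.exists_eq_add_of_le' hk
  calc dist (x (n + N)) xb ≤ C * ν ^ n / (1 - ν) :=
        dist_le_of_le_geometric_of_tendsto ν C hν1 hstep' ((tendsto_add_atTop_iff_nat N).2 hx) n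
    _ = C / (1 - ν) / ν ^ N * ν ^ (n + N) := by
        rw [pow_add]; field_simp

theorem dist_succ_le_of_local_contraction {x : ℕ → α} {e : ℕ → ℝ} {xb : α}
    {ν K ρ : ℝ} {N : ℕ} (hν0 : 0 ≤ ν) (hν1 : ν < 1) (hK : 0 ≤ K) (he : 0 ≤ e N)
    (hloc : ∀ k, N ≤ k → dist (x k) xb ≤ ρ →
      e (k + 1) ≤ ν * e k ∧ dist (x k) (x (k + 1)) ≤ K * e k)
    (hN : dist (x N) xb + K * e N / (1 - ν) ≤ ρ) (n : ℕ) :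
    dist (x (N + n)) (x (N + n + 1)) ≤ K * e N * ν ^ n := by
  have hν1' : 0 < 1 - ν := sub_pos.2 hν1
  have hball : ∀ n, dist (x N) (x (N + n)) ≤ K * e N * (1 - ν ^ n) / (1 - ν) →
      dist (x (N + n)) xb ≤ ρ := by
    intro n hn
    have : K * e N * (1 - ν ^ n) / (1 - ν) ≤ K * e N / (1 - ν) :=
      div_le_div_of_nonneg_right
        (mul_le_of_le_one_right (mul_nonneg hK he) (by linarith [pow_nonneg hν0 n])) hν1'.le
    linarith [dist_triangle_left (x (N + n)) xb (x N)]
  have hinv : ∀ n, e (N + n) ≤ ν ^ n * e N ∧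
      dist (x N) (x (N + n)) ≤ K * e N * (1 - ν ^ n) / (1 - ν) := by
    intro n
    induction n with
    | zero => simp
    | succ n ih =>
      obtain ⟨he', hd'⟩ := hloc (N + n) (Nat.le_add_right N n) (hball n ih.2)
      constructor
      · calc e (N + n + 1) ≤ ν * e (N + n) := he'
          _ ≤ ν * (ν ^ n * e N) := by gcongr; exact ih.1
          _ = ν ^ (n + 1) * e N := by ring
      · calc dist (x N) (x (N + n + 1))
            ≤ dist (x N) (x (N + n)) + dist (x (N + n)) (x (N + n + 1)) := dist_triangle _ _ _
          _ ≤ K * e N * (1 - ν ^ n) / (1 - ν) + K * (ν ^ n * e N) :=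
            add_le_add ih.2 (hd'.trans (mul_le_mul_of_nonneg_left ih.1 hK))
          _ = K * e N * (1 - ν ^ (n + 1)) / (1 - ν) := by field_simp; ring
  calc dist (x (N + n)) (x (N + n + 1)) ≤ K * e (N + n) :=
        (hloc _ (Nat.le_add_right N n) (hball n (hinv n).2)).2
    _ ≤ K * (ν ^ n * e N) := mul_le_mul_of_nonneg_left (hinv n).1 hK
    _ = K * e N * ν ^ n := by ring

theorem exists_dist_le_mul_pow_of_sqrt_le_mul {x : ℕ → α} {xb : α} {τ n Δ : ℕ → ℝ}
    {s : ℕ → ℕ} {a t₀ K ε₁ ε₂ : ℝ} (ha : 0 < a) (ht₀ : 0 < t₀) (hK : 0 < K)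
    (hε₁ : 0 < ε₁) (hε₂ : 0 < ε₂) (hτ₀ : ∀ k, 0 ≤ τ k) (hn : ∀ k, 0 ≤ n k)
    (hstep : ∀ k, dist (x k) (x (k + 1)) ≤ τ k * n k)
    (hdec : ∀ k, a * τ k * n k ^ 2 ≤ Δ k - Δ (k + 1)) (hΔ : ∀ k, 0 < Δ k)
    (hKL : ∀ k, dist (x k) xb < ε₁ → Δ k < ε₁ → √(Δ k) ≤ K * n k)
    (hτ : ∀ k, dist (x k) xb < ε₂ → τ k * n k < ε₂ → t₀ ≤ τ k)
    (hs : Tendsto s atTop atTop) (hxs : Tendsto (x ∘ s) atTop (𝓝 xb))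
    (hΔs : Tendsto (Δ ∘ s) atTop (𝓝 0)) :
    ∃ c > 0, ∃ μ ∈ Set.Ioo (0 : ℝ) 1, ∀ k, dist (x k) xb ≤ c * μ ^ k := by
  set ν := √(K ^ 2 / (K ^ 2 + a * t₀))
  have hν0 : 0 < ν := Real.sqrt_pos.2 (by positivity)
  have hν1 : ν < 1 := by
    rw [Real.sqrt_lt' one_pos, one_pow, div_lt_one (by positivity)]
    linarith [mul_pos ha ht₀]
  have hanti : Antitone Δ := antitone_nat_of_succ_le fun k => by
    nlinarith [hdec k, mul_nonneg (mul_nonneg ha.le (hτ₀ k)) (sq_nonneg (n k))]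
  set ρ := min ε₁ ε₂ / 2
  have hρ : 0 < ρ := by positivity
  -- From `N` on, the remaining path length is at most `K / a * √(Δ N) / (1 - ν) < ρ / 2`, so
  -- the iterates stay within `ρ` of `xb`.
  obtain ⟨N, hxN, hΔN, hlenN⟩ : ∃ N, dist (x N) xb < ρ / 2 ∧ Δ N < ε₁ ∧
      K / a * √(Δ N) / (1 - ν) < ρ / 2 := by
    have hlen : Tendsto (fun j => K / a * √(Δ (s j)) / (1 - ν)) atTop (𝓝 0) := by
      simpa using ((hΔs.sqrt).const_mul (K / a)).div_const (1 - ν)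
    have hdist := tendsto_iff_dist_tendsto_zero.1 hxs
    obtain ⟨j, hj⟩ := ((hdist.eventually (gt_mem_nhds (half_pos hρ))).and
      ((hΔs.eventually (gt_mem_nhds hε₁)).and
        (hlen.eventually (gt_mem_nhds (half_pos hρ))))).exists
    exact ⟨s j, hj.1, hj.2.1, hj.2.2⟩
  have hlenN' : K / a * √(Δ N) ≤ K / a * √(Δ N) / (1 - ν) :=
    le_div_self (by positivity) (by linarith) (by linarith)
  have hloc : ∀ k, N ≤ k → dist (x k) xb ≤ ρ →
      √(Δ (k + 1)) ≤ ν * √(Δ k) ∧ dist (x k) (x (k + 1)) ≤ K / a * √(Δ k) := by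
    intro k hk hxk
    have hρε : ρ < min ε₁ ε₂ := half_lt_self (lt_min hε₁ hε₂)
    have hlenk : K / a * √(Δ k) ≤ K / a * √(Δ N) := by gcongr; exact hanti hk
    obtain ⟨hcontr, hlen⟩ := sqrt_le_mul_sqrt_and_mul_le_of_descent ha ht₀ (hn k) (hΔ k).le
      (hΔ (k + 1)).le (hdec k)
      (hKL k (by linarith [min_le_left ε₁ ε₂]) ((hanti hk).trans_lt hΔN))
      (hτ k (by linarith [min_le_right ε₁ ε₂])) (by linarith [min_le_right ε₁ ε₂])
    exact ⟨hcontr, (hstep k).trans hlen⟩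
  have hsteps := dist_succ_le_of_local_contraction (e := fun k => √(Δ k)) (K := K / a)
    hν0.le hν1 (by positivity) (Real.sqrt_nonneg _) hloc (by linarith)
  obtain ⟨c, hc, hxc⟩ := exists_dist_le_mul_pow_of_dist_succ_le hν0 hν1 hsteps hs hxs
  exact ⟨c, hc, ν, ⟨hν0, hν1⟩, hxc⟩

end Metric

theorem rcsn_Rlinear_rate_KL_exponent_le_half_general
    {E : Type*} [NormedAddCommGroup E] [InnerProductSpace ℝ E] [FiniteDimensional ℝ E]
    (g h : E → ℝ) (hg : ContDiff ℝ 2 g) (hh : Differentiable ℝ h)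
    (hhl : LocallyLipschitz (gradient h))
    (φ : E → ℝ) (hφ : ∀ y, φ y = g y - h y)
    (σ β ζ tmin ρmax : ℝ)
    (hσ : σ ∈ Set.Ioo (0 : ℝ) 1) (hβ : β ∈ Set.Ioo (0 : ℝ) 1)
    (hζ : 0 < ζ) (htmin : 0 < tmin) (hρmax : 0 ≤ ρmax)
    (x d : ℕ → E) (τ ρ : ℕ → ℝ)
    (hρk : ∀ k, ρ k ∈ Set.Icc 0 ρmax)
    (hdne : ∀ k, d k ≠ 0)
    (hdir : ∀ k, fderiv ℝ (gradient g) (x k) (d k) + ρ k • d k = -(gradient φ (x k)))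
    (hdesc : ∀ k, ⟪gradient φ (x k), d k⟫ ≤ -ζ * ‖d k‖ ^ 2)
    (hτpos : ∀ k, 0 < τ k)
    (hls : ∀ k, φ (x k + τ k • d k) ≤ φ (x k) + σ * τ k * ⟪gradient φ (x k), d k⟫)
    (hbt : ∀ k, tmin ≤ τ k ∨
      φ (x k) + σ * (τ k / β) * ⟪gradient φ (x k), d k⟫ < φ (x k + (τ k / β) • d k))
    (hupd : ∀ k, x (k + 1) = x k + τ k • d k)
    (xb : E)
    (hacc : ∃ s : ℕ → ℕ, StrictMono s ∧ Tendsto (fun j => x (s j)) atTop (𝓝 xb))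
    (M θ : ℝ) (hM : 0 < M) (hθ : θ ∈ Set.Ioc (0 : ℝ) (1 / 2))
    (η : ℝ) (hη : 0 < η)
    (hKL : ∀ y : E, ‖y - xb‖ ≤ η → φ xb < φ y → φ y < φ xb + η →
      1 ≤ M * (1 - θ) * (φ y - φ xb) ^ (-θ) * ‖gradient φ y‖) :
    ∃ c > (0 : ℝ), ∃ μ ∈ Set.Ioo (0 : ℝ) 1, ∀ k, ‖x k - xb‖ ≤ c * μ ^ k := by
  obtain ⟨s, hs, hxs⟩ := hacc
  have hφd : Differentiable ℝ φ := funext hφ ▸ (hg.differentiable two_ne_zero).sub hh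
  obtain ⟨A, hA⟩ := (isCompact_closedBall xb η).exists_bound_of_continuousOn
    ((hg.gradient (n := 1)).continuous_fderiv one_ne_zero).continuousOn
  obtain ⟨L, hL⟩ := (locallyLipschitz_gradient_of_eq_sub hg hh hhl hφ).locallyLipschitzOn
    |>.exists_lipschitzOnWith_of_compact (isCompact_closedBall xb η)
  have hdec : ∀ k, σ * ζ * τ k * ‖d k‖ ^ 2 ≤ φ (x k) - φ (x (k + 1)) := fun k => by
    nlinarith [hupd k ▸ hls k, mul_le_mul_of_nonneg_left (hdesc k) (mul_pos hσ.1 (hτpos k)).le]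
  have hval : ∀ k, φ xb < φ (x k) := by
    refine StrictAnti.lt_of_tendsto_comp (strictAnti_nat_of_succ_lt fun k => sub_pos.1 ?_)
      hs.tendsto_atTop ((hφd.continuous.tendsto xb).comp hxs)
    have := norm_pos_iff.2 (hdne k)
    exact (mul_pos (mul_pos (mul_pos hσ.1 hζ) (hτpos k)) (by positivity)).trans_le (hdec k)
  have hθ1 : 0 < 1 - θ := by linarith [hθ.2]
  simp only [← dist_eq_norm]
  -- `ε₂ = βη/2` keeps a rejected trial point `x k + (τ k / β) • d k` in the ball where
  -- `gradient φ` is `L`-Lipschitz.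
  refine exists_dist_le_mul_pow_of_sqrt_le_mul (a := σ * ζ) (n := fun k => ‖d k‖)
    (t₀ := min tmin (β * (1 - σ) * ζ / (L + 1))) (K := M * (1 - θ) * (max A 1 + ρmax))
    (ε₁ := min 1 η) (ε₂ := β * η / 2) (Δ := fun k => φ (x k) - φ xb) (mul_pos hσ.1 hζ)
    (lt_min htmin (by have := hβ.1; have := sub_pos.2 hσ.2; positivity)) (by positivity)
    (lt_min one_pos hη) (by nlinarith [hβ.1]) (fun k => (hτpos k).le) (fun k => norm_nonneg _)
    (fun k => ?_) (fun k => by linarith [hdec k]) (fun k => sub_pos.2 (hval k))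
    (fun k hxk hΔk => ?_) (fun k hxk hlen => ?_) hs.tendsto_atTop hxs
    (by simpa [Function.comp_def] using ((hφd.continuous.tendsto xb).comp hxs).sub_const (φ xb))
  · rw [hupd, dist_self_add_right, norm_smul, Real.norm_of_nonneg (hτpos k).le]
  · have hxk' : ‖x k - xb‖ ≤ η :=
      (dist_eq_norm (x k) xb ▸ hxk.le).trans (min_le_right _ _)
    calc √(φ (x k) - φ xb) ≤ M * (1 - θ) * ‖gradient φ (x k)‖ :=
          sqrt_le_mul_of_one_le_mul_rpow_neg (sub_pos.2 (hval k)) (hΔk.le.trans (min_le_left _ _))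
            hθ.2 (hKL _ hxk' (hval k) (by linarith [min_le_right 1 η]))
      _ ≤ M * (1 - θ) * ((max A 1 + ρmax) * ‖d k‖) := by
          gcongr
          exact norm_le_mul_norm_of_add_smul_eq_neg
            ((hA _ (mem_closedBall_iff_norm.2 hxk')).trans (le_max_left _ 1)) (hρk k) (hdir k)
      _ = M * (1 - θ) * (max A 1 + ρmax) * ‖d k‖ := by ring
  · exact min_le_of_backtracking (convex_closedBall xb η) (fun z _ => hφd z) hL
      (mem_closedBall.2 (by nlinarith [hβ.2]))
      (add_div_smul_mem_closedBall (Set.Ioo_subset_Ioc_self hβ) hxk hlen (hτpos k).le)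
      (hτpos k) hβ.1 hσ.2 (hdne k) (hdesc k) (hbt k)

theorem rcsn_Rlinear_rate_KL_exponent_le_half
    {E : Type*} [NormedAddCommGroup E] [InnerProductSpace ℝ E] [FiniteDimensional ℝ E]
    (g h : E → ℝ) (hg : ContDiff ℝ 2 g) (hh : Differentiable ℝ h)
    (hhl : LocallyLipschitz (gradient h))
    (φ : E → ℝ) (hφ : ∀ y, φ y = g y - h y)
    (σ β ζ tmin ρmax : ℝ)
    (hσ : σ ∈ Set.Ioo (0 : ℝ) 1) (hβ : β ∈ Set.Ioo (0 : ℝ) 1)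
    (hζ : 0 < ζ) (htmin : 0 < tmin) (hρmax : 0 ≤ ρmax)
    (x d : ℕ → E) (τ ρ : ℕ → ℝ)
    (hwne : ∀ k, gradient φ (x k) ≠ 0)
    (hρk : ∀ k, ρ k ∈ Set.Icc 0 ρmax)
    (hdne : ∀ k, d k ≠ 0)
    (hdir : ∀ k, fderiv ℝ (gradient g) (x k) (d k) + ρ k • d k = -(gradient φ (x k)))
    (hdesc : ∀ k, ⟪gradient φ (x k), d k⟫ ≤ -ζ * ‖d k‖ ^ 2)
    (hτpos : ∀ k, 0 < τ k)
    (hls : ∀ k, φ (x k + τ k • d k) ≤ φ (x k) + σ * τ k * ⟪gradient φ (x k), d k⟫)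
    (hbt : ∀ k, tmin ≤ τ k ∨
      φ (x k) + σ * (τ k / β) * ⟪gradient φ (x k), d k⟫ < φ (x k + (τ k / β) • d k))
    (hupd : ∀ k, x (k + 1) = x k + τ k • d k)
    (hbdd : BddBelow (Set.range φ))
    (xb : E)
    (hacc : ∃ s : ℕ → ℕ, StrictMono s ∧ Tendsto (fun j => x (s j)) atTop (𝓝 xb))
    (M θ : ℝ) (hM : 0 < M) (hθ : θ ∈ Set.Ioc (0 : ℝ) (1 / 2))
    (η : ℝ) (hη : 0 < η)
    (hKL : ∀ y : E, ‖y - xb‖ ≤ η → φ xb < φ y → φ y < φ xb + η →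
      1 ≤ M * (1 - θ) * (φ y - φ xb) ^ (-θ) * ‖gradient φ y‖) :
    ∃ c > (0 : ℝ), ∃ μ ∈ Set.Ioo (0 : ℝ) 1, ∀ k, ‖x k - xb‖ ≤ c * μ ^ k :=
  rcsn_Rlinear_rate_KL_exponent_le_half_general g h hg hh hhl φ hφ σ β ζ tmin ρmax hσ hβ hζ htmin
    hρmax x d τ ρ hρk hdne hdir hdesc hτpos hls hbt hupd xb hacc M θ hM hθ η hη hKL
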